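/- Let T_n = {l ∈ [0,1]ⁿ : l₁ ≥ … ≥ l_n, l₁ + l₂ ≤ 1, and l₁ ≤ l₂ + … + l_n}. Then T_n = DC_n ∩ F_n, where DC_n is the n-demicube and F_n = {l ∈ [0,1]ⁿ : l₁ + l₂ ≤ 1, l₁ ≥ … ≥ l_n}. -/

import Mathlib

/-!
Every even vertex `v` with `v₁ = 1` has a second coordinate equal to `1`, so the demicube lies in
the half-space `l₁ ≤ l₂ + ⋯ + l_n`; this gives `DC_n ∩ F_n ⊆ T_n`.

Conversely, `T_n` lies in the compact convex polytope `unsortedT`, so by Krein–Milman it suffices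
to place the extreme points of `unsortedT` in the demicube. An extreme point `l` with
`l₁ = l₂ + ⋯ + l_n` is a convex combination of `0` and the edges `e₁ + e_i`. Otherwise, perturbing
`l` in directions that keep all its tight constraints tight shows `l₁ = 1/2` and `l_i ∈ {0, 1/2}`,
i.e. `l = ½·1_J` with `|J| ≥ 2`, and such a point is an explicit average of even vertices.
-/

open Finset Filter Topology

theorem eventually_add_mul_le_add_mul {p q r s : ℝ} (h : p ≤ r) (hqs : p = r → q = s) :
    ∀ᶠ ε in 𝓝 (0 : ℝ), p + ε * q ≤ r + ε * s := by
  rcases h.lt_or_eq with h | h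
  · refine (ContinuousAt.eventually_lt (by fun_prop) (by fun_prop) (by simpa using h)).mono
      fun _ => le_of_lt
  · exact Eventually.of_forall fun ε => by rw [h, hqs h]

theorem eq_zero_of_mem_extremePoints_of_eventually_add_smul_mem {E : Type*} [AddCommGroup E]
    [Module ℝ E] {A : Set E} {x d : E} (hx : x ∈ A.extremePoints ℝ)
    (hd : ∀ᶠ ε in 𝓝 (0 : ℝ), x + ε • d ∈ A) : d = 0 := by
  have hneg : ∀ᶠ ε in 𝓝 (0 : ℝ), x + (-ε) • d ∈ A :=
    (continuous_neg.tendsto' 0 0 neg_zero).eventually hd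
  obtain ⟨ε, ⟨hplus, hminus⟩, hε⟩ :=
    (((hd.and hneg).filter_mono nhdsWithin_le_nhds).and
      (eventually_mem_nhdsWithin (s := {(0 : ℝ)}ᶜ))).exists
  have hmid : x ∈ openSegment ℝ (x + ε • d) (x + (-ε) • d) :=
    ⟨1 / 2, 1 / 2, by norm_num, by norm_num, by norm_num, by module⟩
  have hεd : x + ε • d = x := hx.2 hplus hminus hmid
  exact (smul_eq_zero.mp (add_eq_left.mp hεd)).resolve_left hε

variable {ι : Type*} [Fintype ι]

def evenVertices (ι : Type*) [Fintype ι] : Set (ι → ℝ) :=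
  {v | (∀ i, v i = 0 ∨ v i = 1) ∧ ∃ k : ℤ, ∑ i, v i = 2 * (k : ℝ)}

def demicube (ι : Type*) [Fintype ι] : Set (ι → ℝ) :=
  convexHull ℝ (evenVertices ι)

theorem convex_demicube : Convex ℝ (demicube ι) := convex_convexHull ℝ _

theorem isCompact_demicube : IsCompact (demicube ι) := by
  refine ((Set.Finite.pi (t := fun _ => ({0, 1} : Set ℝ)) fun _ => Set.toFinite _).subset ?_
    ).isCompact_convexHull (𝕜 := ℝ)
  rintro v ⟨hv, -⟩ i -
  rcases hv i with h | h <;> simp [h]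

theorem indicator_mem_demicube {S : Finset ι} (hS : Even S.card) :
    (S : Set ι).indicator 1 ∈ demicube ι := by
  classical
  refine subset_convexHull ℝ _ ⟨fun i => ?_, ?_⟩
  · by_cases hi : i ∈ S <;> simp [hi]
  · obtain ⟨k, hk⟩ := hS
    refine ⟨k, ?_⟩
    simp only [Set.indicator_apply, mem_coe, Pi.one_apply, sum_boole,
      filter_mem_eq_inter, univ_inter, hk]
    push_cast; ring

theorem zero_mem_demicube : (0 : ι → ℝ) ∈ demicube ι := by
  have := indicator_mem_demicube (ι := ι) (S := ∅) (by simp)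
  rwa [coe_empty, Set.indicator_empty'] at this

theorem half_indicator_mem_demicube {J : Finset ι} (hJ : 2 ≤ J.card) :
    (1 / 2 : ℝ) • (J : Set ι).indicator 1 ∈ demicube ι := by
  classical
  rcases Nat.even_or_odd J.card with heven | hodd
  · exact convex_demicube.smul_mem_of_zero_mem zero_mem_demicube
      (indicator_mem_demicube heven) (by norm_num)
  obtain ⟨j, hj, k, hk, hjk⟩ := one_lt_card.mp hJ
  have herase : ∀ {i}, i ∈ J → Even (J.erase i).card := fun hi => by
    rw [card_erase_of_mem hi]; exact Nat.Odd.sub_odd hodd odd_one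
  have hpair : Even ({j, k} : Finset ι).card := by rw [card_pair hjk]; exact even_two
  -- the four even sets `J \ {j}`, `J \ {k}`, `{j, k}` and `∅`, each with weight 1/4
  have key := convex_demicube
    (convex_demicube (indicator_mem_demicube (herase hj)) (indicator_mem_demicube hpair)
      (by norm_num : (0 : ℝ) ≤ 1 / 2) (by norm_num : (0 : ℝ) ≤ 1 / 2) (by norm_num))
    (convex_demicube (indicator_mem_demicube (herase hk)) zero_mem_demicube
      (by norm_num : (0 : ℝ) ≤ 1 / 2) (by norm_num : (0 : ℝ) ≤ 1 / 2) (by norm_num))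
    (by norm_num : (0 : ℝ) ≤ 1 / 2) (by norm_num : (0 : ℝ) ≤ 1 / 2) (by norm_num)
  convert key using 1
  ext i
  by_cases hij : i = j <;> by_cases hik : i = k <;> by_cases hiJ : i ∈ J <;>
    simp_all <;> norm_num

variable [DecidableEq ι]

theorem demicube_subset_apex_le_sum (o : ι) :
    demicube ι ⊆ {x | x o ≤ ∑ i ∈ univ.erase o, x i} := by
  refine convexHull_min ?_ ?_
  · rintro v ⟨hv, k, hk⟩
    rw [← add_sum_erase _ _ (mem_univ o)] at hk
    have hnonneg : 0 ≤ ∑ i ∈ univ.erase o, v i :=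
      sum_nonneg fun i _ => by rcases hv i with h | h <;> simp [h]
    rcases hv o with h | h
    · simp only [Set.mem_ofPred_eq, h]; exact hnonneg
    · have : (0 : ℝ) < k := by linarith
      have : (1 : ℝ) ≤ k := by exact_mod_cast (Int.cast_pos.mp this : 0 < k)
      simp only [Set.mem_ofPred_eq, h]; linarith
  · intro x hx y hy a b ha hb _
    simp only [Set.mem_ofPred_eq, Pi.add_apply, Pi.smul_apply, smul_eq_mul, sum_add_distrib,
      ← mul_sum] at *
    exact add_le_add (mul_le_mul_of_nonneg_left hx ha) (mul_le_mul_of_nonneg_left hy hb)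

theorem mem_demicube_of_apex_eq_sum {o : ι} {x : ι → ℝ} (hx : ∀ i, 0 ≤ x i)
    (ho : x o ≤ 1) (h : x o = ∑ i ∈ univ.erase o, x i) : x ∈ demicube ι := by
  -- `x` combines the edges `{o, i}` with weights `x i` and `0` with weight `1 - x o`
  let w : ι → ℝ := Function.update x o (1 - x o)
  let z : ι → ι → ℝ := fun i => if i = o then 0 else (({o, i} : Finset ι) : Set ι).indicator 1
  have hw : ∑ i, w i = 1 := by
    rw [← add_sum_erase _ _ (mem_univ o), sum_congr rfl fun i hi =>
      Function.update_of_ne (ne_of_mem_erase hi) _ _, ← h]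
    simp [w]
  have hxwz : x = ∑ i, w i • z i := by
    ext j
    rw [Finset.sum_apply]
    by_cases hj : j = o
    · subst hj
      rw [h, ← add_sum_erase _ _ (mem_univ j)]
      refine (zero_add _).symm.trans (congrArg₂ _ (by simp [z]) (sum_congr rfl fun i hi => ?_))
      have hi := ne_of_mem_erase hi
      simp [w, z, hi]
    · rw [sum_eq_single j (fun i _ hij => ?_) (by simp)]
      · simp [w, z, hj]
      · by_cases hi : i = o
        · simp [z, hi]
        · simp [z, hi, hj, Ne.symm hij]
  rw [hxwz]
  refine convex_demicube.sum_mem (fun i _ => ?_) hw (fun i _ => ?_)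
  · by_cases hi : i = o
    · simp [w, hi, ho]
    · simp [w, hi, hx i]
  · by_cases hi : i = o
    · simp [z, hi, zero_mem_demicube]
    · simp only [z, if_neg hi]
      exact indicator_mem_demicube (by rw [card_pair (Ne.symm hi)]; exact even_two)

/-- The paper's `T_n` with the order among the coordinates other than the apex `o` forgotten,
so that `T_n ⊆ unsortedT 1`. -/
def unsortedT (o : ι) : Set (ι → ℝ) :=
  {x | (∀ i, 0 ≤ x i) ∧ (∀ i ≠ o, x i ≤ x o ∧ x o + x i ≤ 1) ∧ x o ≤ ∑ i ∈ univ.erase o, x i}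

variable {o : ι}

theorem convex_unsortedT : Convex ℝ (unsortedT o) := by
  rintro x ⟨hx0, hx1, hxs⟩ y ⟨hy0, hy1, hys⟩ a b ha hb hab
  simp only [unsortedT, Set.mem_ofPred_eq, Pi.add_apply, Pi.smul_apply, smul_eq_mul,
    sum_add_distrib, ← mul_sum]
  refine ⟨fun i => by have := hx0 i; have := hy0 i; positivity, fun i hi => ⟨?_, ?_⟩, ?_⟩
  · nlinarith [hx1 i hi, hy1 i hi]
  · nlinarith [hx1 i hi, hy1 i hi]
  · nlinarith

theorem apex_lt_one_of_mem_unsortedT {x : ι → ℝ} (hx : x ∈ unsortedT o) : x o < 1 := by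
  obtain ⟨hx0, hx1, hxs⟩ := hx
  by_contra! h
  have : ∑ i ∈ univ.erase o, x i ≤ 0 :=
    sum_nonpos fun i hi => by linarith [(hx1 i (ne_of_mem_erase hi)).2]
  linarith

theorem isCompact_unsortedT : IsCompact (unsortedT o) := by
  refine (isCompact_Icc (a := (0 : ι → ℝ)) (b := 1)).of_isClosed_subset ?_ ?_
  · simp only [unsortedT, Set.ofPred_and, Set.ofPred_forall]
    refine .inter (isClosed_iInter fun i => ?_)
      (.inter (isClosed_iInter fun i => isClosed_iInter fun _ => .inter ?_ ?_) ?_) <;>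
    exact isClosed_le (by fun_prop) (by fun_prop)
  · intro x hx
    refine ⟨hx.1, fun i => ?_⟩
    have ho := apex_lt_one_of_mem_unsortedT hx
    by_cases hi : i = o
    · subst hi; exact ho.le
    · simpa using (by linarith [(hx.2.1 i hi).2, hx.1 o] : x i ≤ 1)

theorem eventually_add_smul_mem_unsortedT {x d : ι → ℝ} (hx : x ∈ unsortedT o)
    (h0 : ∀ i, x i = 0 → d i = 0) (hle : ∀ i ≠ o, x i = x o → d i = d o)
    (h1 : ∀ i ≠ o, x o + x i = 1 → d o + d i = 0)
    (hs : x o = ∑ i ∈ univ.erase o, x i → d o = ∑ i ∈ univ.erase o, d i) :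
    ∀ᶠ ε in 𝓝 (0 : ℝ), x + ε • d ∈ unsortedT o := by
  obtain ⟨hx0, hx1, hxs⟩ := hx
  have e0 (i : ι) : ∀ᶠ ε in 𝓝 (0 : ℝ), 0 ≤ x i + ε * d i :=
    (eventually_add_mul_le_add_mul (q := 0) (hx0 i) fun h => (h0 i h.symm).symm).mono
      fun ε h => by simpa using h
  have e1 (i : ι) : ∀ᶠ ε in 𝓝 (0 : ℝ), i ≠ o →
      x i + ε * d i ≤ x o + ε * d o ∧ x o + ε * d o + (x i + ε * d i) ≤ 1 := by
    by_cases hi : i = o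
    · exact Eventually.of_forall fun _ h => absurd hi h
    · filter_upwards [eventually_add_mul_le_add_mul (hx1 i hi).1 (hle i hi),
        eventually_add_mul_le_add_mul (s := 0) (hx1 i hi).2 (h1 i hi)] with ε ha hb _
      exact ⟨ha, by linarith⟩
  filter_upwards [eventually_all.mpr e0, eventually_all.mpr e1,
    eventually_add_mul_le_add_mul hxs hs] with ε h0' h1' hs'
  simp only [unsortedT, Set.mem_ofPred_eq, Pi.add_apply, Pi.smul_apply, smul_eq_mul,
    sum_add_distrib, ← mul_sum]
  exact ⟨h0', h1', hs'⟩

theorem apex_eq_half_of_mem_extremePoints {x : ι → ℝ} (hx : x ∈ (unsortedT o).extremePoints ℝ)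
    (hs : x o < ∑ i ∈ univ.erase o, x i) : x o = 1 / 2 := by
  obtain ⟨hx0, hx1, -⟩ := hx.1
  rcases lt_trichotomy (x o) (1 / 2) with hlt | heq | hgt
  · -- all constraints with a nonzero constant are slack, so `x` can be rescaled
    have hzero : x = 0 := eq_zero_of_mem_extremePoints_of_eventually_add_smul_mem hx <|
      eventually_add_smul_mem_unsortedT hx.1 (fun _ h => h) (fun _ _ h => h)
        (fun i hi h => absurd h (by linarith [(hx1 i hi).1])) id
    simp [hzero] at hs
  · exact heq
  · -- the only tight constraints are among the `x o + x i ≤ 1`, and `d` keeps them tight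
    let d : ι → ℝ := fun i => if i = o then 1 else if x o + x i = 1 then -1 else 0
    have hd := eq_zero_of_mem_extremePoints_of_eventually_add_smul_mem hx <|
      eventually_add_smul_mem_unsortedT (d := d) hx.1 ?_ ?_ ?_ (fun h => absurd h hs.ne)
    · simpa [d] using congrFun hd o
    · intro i hi
      by_cases hio : i = o
      · subst hio; linarith
      · have := apex_lt_one_of_mem_unsortedT hx.1
        have : x o + x i ≠ 1 := by linarith
        simp [d, hio, this]
    · intro i hio hi
      linarith [(hx1 i hio).2]
    · intro i hio hi
      simp [d, hio, hi]

theorem eq_zero_or_eq_half_of_mem_extremePoints {x : ι → ℝ}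
    (hx : x ∈ (unsortedT o).extremePoints ℝ) (hs : x o < ∑ i ∈ univ.erase o, x i)
    (ho : x o = 1 / 2) {i : ι} (hio : i ≠ o) : x i = 0 ∨ x i = 1 / 2 := by
  obtain ⟨hx0, hx1, -⟩ := hx.1
  by_contra! h
  have hpos : 0 < x i := (hx0 i).lt_of_ne' h.1
  have hlt : x i < 1 / 2 := lt_of_le_of_ne (by linarith [(hx1 i hio).2]) h.2
  have hd := eq_zero_of_mem_extremePoints_of_eventually_add_smul_mem hx <|
    eventually_add_smul_mem_unsortedT (d := Pi.single i 1) hx.1 ?_ ?_ ?_ (fun h => absurd h hs.ne)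
  · simpa using congrFun hd i
  · intro j hj
    by_cases hji : j = i
    · subst hji; linarith
    · simp [hji]
  · intro j _ hj
    by_cases hji : j = i
    · subst hji; linarith
    · simp [hji, hio.symm]
  · intro j _ hj
    by_cases hji : j = i
    · subst hji; linarith
    · simp [hji, hio.symm]

theorem extremePoints_unsortedT_subset_demicube : (unsortedT o).extremePoints ℝ ⊆ demicube ι := by
  intro x hx
  obtain ⟨hx0, -, hxs⟩ := hx.1
  rcases hxs.eq_or_lt with heq | hlt
  · exact mem_demicube_of_apex_eq_sum hx0 (apex_lt_one_of_mem_unsortedT hx.1).le heq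
  have ho := apex_eq_half_of_mem_extremePoints hx hlt
  let J := univ.filter fun i => x i ≠ 0
  have hxJ : x = (1 / 2 : ℝ) • (J : Set ι).indicator 1 := by
    ext i
    by_cases hio : i = o
    · simp [J, hio, ho]
    · rcases eq_zero_or_eq_half_of_mem_extremePoints hx hlt ho hio with h | h <;>
        simp [J, h]
  have hJ : 2 ≤ J.card := by
    obtain ⟨i, hi, hxi⟩ :=
      exists_ne_zero_of_sum_ne_zero (by linarith : ∑ i ∈ univ.erase o, x i ≠ 0)
    exact one_lt_card.mpr ⟨o, by simp [J, ho], i, by simp [J, hxi], (ne_of_mem_erase hi).symm⟩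
  rw [hxJ]
  exact half_indicator_mem_demicube hJ

theorem unsortedT_subset_demicube : unsortedT o ⊆ demicube ι := by
  rw [← closure_convexHull_extremePoints isCompact_unsortedT convex_unsortedT]
  exact closure_minimal (convexHull_min extremePoints_unsortedT_subset_demicube convex_demicube)
    isCompact_demicube.isClosed

/-- `T_n = DC_n ∩ F_n`: the set of `l ∈ [0,1]ⁿ` with `l₁ ≥ … ≥ l_n`, `l₁ + l₂ ≤ 1` and
`l₁ ≤ l₂ + … + l_n` is the intersection of the `n`-demicube (convex hull of even vertices of
the cube) with the fundamental domain `F_n`. -/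
theorem Tn_eq_demicube_inter_Fn (n : ℕ) (hn : 2 ≤ n) :
    {l : Fin n → ℝ | (∀ i, l i ∈ Set.Icc (0 : ℝ) 1) ∧
        (∀ i j : Fin n, i ≤ j → l j ≤ l i) ∧
        l ⟨0, by omega⟩ + l ⟨1, by omega⟩ ≤ 1 ∧
        l ⟨0, by omega⟩ ≤ ∑ i ∈ univ.erase (⟨0, by omega⟩ : Fin n), l i} =
      (convexHull ℝ {v : Fin n → ℝ |
          (∀ i, v i = 0 ∨ v i = 1) ∧ ∃ k : ℤ, ∑ i, v i = 2 * (k : ℝ)}) ∩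
        {l : Fin n → ℝ | (∀ i, l i ∈ Set.Icc (0 : ℝ) 1) ∧
          (∀ i j : Fin n, i ≤ j → l j ≤ l i) ∧
          l ⟨0, by omega⟩ + l ⟨1, by omega⟩ ≤ 1} := by
  ext l
  constructor
  · rintro ⟨hI, hmono, h01, hsum⟩
    have hT : l ∈ unsortedT ⟨0, by omega⟩ := by
      refine ⟨fun i => (hI i).1,
        fun i hi => ⟨hmono _ _ (Fin.le_def.mpr (Nat.zero_le _)), ?_⟩, hsum⟩
      have : (⟨1, by omega⟩ : Fin n) ≤ i := Fin.le_def.mpr (Nat.one_le_iff_ne_zero.mpr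
        fun h => hi (Fin.ext h))
      linarith [hmono _ _ this]
    exact ⟨unsortedT_subset_demicube hT, hI, hmono, h01⟩
  · rintro ⟨hC, hI, hmono, h01⟩
    exact ⟨hI, hmono, h01, demicube_subset_apex_le_sum _ hC⟩
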